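/- arXiv:1908.11627 — 4 statements merged into one kernel-verified Lean document; each statement's English description precedes it below -/
import Mathlib

section
/- Let h₁ = (x, y) and h₂ = (x', y') be nonzero vectors in ℤ² with x y' − x' y ≠ 0. For (n, j) = (n₁, n₂, j₁, j₂) ∈ ℤ⁴, define the function D(n, j) : ℝ⁴ → ℝ by D(n, j)(λ₁, λ₂, m, M) = n₁[(xλ₁ + yλ₂ + m)² + M] + n₂[(x'λ₁ + y'λ₂ + m)² + M] + (j₁λ₁ + j₂λ₂ + m)² + M. Then for every (n, j) ∈ ℤ² × ℤ² with (n, j) ∉ {(−e₁, h₁), (−e₂, h₂)}, the function D(n, j) is not identically zero on ℝ⁴, i.e. there exists (λ₁, λ₂, m, M) ∈ ℝ⁴ with D(n, j)(λ₁, λ₂, m, M) ≠ 0. -/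
/-- For non-parallel nonzero `h₁ = (x, y)`, `h₂ = (x', y')` in `ℤ²`,
the diagonal polynomial `D(n, j)` is not identically zero on `ℝ⁴` for any lattice point
`(n, j)` outside the resonant set `{(−e₁, h₁), (−e₂, h₂)}`. -/
theorem stmt_2 (x y x' y' : ℤ) (hh₁ : (x, y) ≠ ((0 : ℤ), (0 : ℤ)))
    (hh₂ : (x', y') ≠ ((0 : ℤ), (0 : ℤ)))
    (hnp : x * y' - x' * y ≠ 0)
    (n₁ n₂ j₁ j₂ : ℤ)
    (hne₁ : ((n₁, n₂), (j₁, j₂)) ≠ (((-1 : ℤ), (0 : ℤ)), (x, y)))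
    (hne₂ : ((n₁, n₂), (j₁, j₂)) ≠ (((0 : ℤ), (-1 : ℤ)), (x', y'))) :
    ∃ lam₁ lam₂ m M : ℝ,
      (n₁ : ℝ) * (((x : ℝ) * lam₁ + (y : ℝ) * lam₂ + m) ^ 2 + M)
        + (n₂ : ℝ) * (((x' : ℝ) * lam₁ + (y' : ℝ) * lam₂ + m) ^ 2 + M)
        + ((j₁ : ℝ) * lam₁ + (j₂ : ℝ) * lam₂ + m) ^ 2 + M ≠ 0 := by
  by_contra hc
  push_neg at hc
  set D : ℝ := (x : ℝ) * y' - (x' : ℝ) * y with hDdef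
  have hDne : D ≠ 0 := by
    simp only [hDdef]
    exact_mod_cast hnp
  set A : ℝ := (j₁ : ℝ) * y' - (j₂ : ℝ) * x' with hAdef
  set B : ℝ := (j₂ : ℝ) * x - (j₁ : ℝ) * y with hBdef
  have h0 : (n₁ : ℝ) + n₂ + 1 = 0 := by
    have := hc 0 0 0 1
    linarith [this]
  have key : ∀ u v m : ℝ,
      (n₁ : ℝ) * D ^ 2 * (u + m) ^ 2 + (n₂ : ℝ) * D ^ 2 * (v + m) ^ 2
        + (A * u + B * v + D * m) ^ 2 = 0 := by
    intro u v m
    have h := hc ((y' : ℝ) * u - (y : ℝ) * v) ((x : ℝ) * v - (x' : ℝ) * u) (D * m) 0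
    linear_combination h
  have e1 := key 1 0 0
  have e2 := key 0 1 0
  have e3 := key 1 1 0
  have e4 := key 1 0 1
  have e5 := key 0 1 1
  have hAB : A * B = 0 := by linear_combination (e3 - e1 - e2) / 2
  have hsum : A ^ 2 + B ^ 2 = D ^ 2 := by linear_combination e1 + e2 - D ^ 2 * h0
  have hA : A * (D - A) = 0 := by
    linear_combination (e4 - 4 * e1 - e2) / 2 + hsum / 2
  have hB : B * (D - B) = 0 := by
    linear_combination (e5 - e1 - 4 * e2) / 2 + hsum / 2
  rcases mul_eq_zero.1 hA with hA0 | hAD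
  · -- A = 0, hence B = D, n₁ = 0, n₂ = -1, (j₁, j₂) = (x', y')
    have hBD : B = D := by
      rcases mul_eq_zero.1 hB with hB0 | hBD
      · exfalso
        apply hDne
        have h2 : D ^ 2 = 0 := by linear_combination A * hA0 + B * hB0 - hsum
        exact pow_eq_zero_iff (by norm_num) |>.1 h2
      · linarith
    have hn1 : (n₁ : ℝ) * D ^ 2 = 0 := by linear_combination e1 - A * hA0
    have hn2 : (n₂ : ℝ) * D ^ 2 = -D ^ 2 := by
      linear_combination e2 - (B + D) * hBD
    have hD2 : D ^ 2 ≠ 0 := pow_ne_zero 2 hDne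
    have hn1' : (n₁ : ℝ) = 0 := by
      rcases mul_eq_zero.1 hn1 with h | h
      · exact h
      · exact absurd h hD2
    have hn2' : (n₂ : ℝ) = -1 := by
      have := mul_right_cancel₀ hD2 (by linear_combination hn2 : (n₂ : ℝ) * D ^ 2 = (-1) * D ^ 2)
      exact this
    have hj1 : (j₁ : ℝ) * D = (x' : ℝ) * D := by
      linear_combination (x : ℝ) * hA0 + (x' : ℝ) * hBD
    have hj2 : (j₂ : ℝ) * D = (y' : ℝ) * D := by
      linear_combination (y : ℝ) * hA0 + (y' : ℝ) * hBD
    have hj1' : (j₁ : ℝ) = x' := mul_right_cancel₀ hDne hj1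
    have hj2' : (j₂ : ℝ) = y' := mul_right_cancel₀ hDne hj2
    exact hne₂ (by
      have e1 : n₁ = 0 := by exact_mod_cast hn1'
      have e2 : n₂ = -1 := by exact_mod_cast hn2'
      have e3 : j₁ = x' := by exact_mod_cast hj1'
      have e4 : j₂ = y' := by exact_mod_cast hj2'
      simp [e1, e2, e3, e4])
  · -- A = D, hence B = 0, n₁ = -1, n₂ = 0, (j₁, j₂) = (x, y)
    have hAD' : A = D := by linarith
    have hB0 : B = 0 := by
      rcases mul_eq_zero.1 hAB with h | h
      · exact absurd (hAD' ▸ h) hDne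
      · exact h
    have hn1 : (n₁ : ℝ) * D ^ 2 = -D ^ 2 := by
      linear_combination e1 - (A + D) * hAD'
    have hn2 : (n₂ : ℝ) * D ^ 2 = 0 := by linear_combination e2 - B * hB0
    have hD2 : D ^ 2 ≠ 0 := pow_ne_zero 2 hDne
    have hn1' : (n₁ : ℝ) = -1 :=
      mul_right_cancel₀ hD2 (by linear_combination hn1 : (n₁ : ℝ) * D ^ 2 = (-1) * D ^ 2)
    have hn2' : (n₂ : ℝ) = 0 := by
      rcases mul_eq_zero.1 hn2 with h | h
      · exact h
      · exact absurd h hD2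
    have hj1 : (j₁ : ℝ) * D = (x : ℝ) * D := by
      linear_combination (x : ℝ) * hAD' + (x' : ℝ) * hB0
    have hj2 : (j₂ : ℝ) * D = (y : ℝ) * D := by
      linear_combination (y : ℝ) * hAD' + (y' : ℝ) * hB0
    have hj1' : (j₁ : ℝ) = x := mul_right_cancel₀ hDne hj1
    have hj2' : (j₂ : ℝ) = y := mul_right_cancel₀ hDne hj2
    exact hne₁ (by
      have e1 : n₁ = -1 := by exact_mod_cast hn1'
      have e2 : n₂ = 0 := by exact_mod_cast hn2'
      have e3 : j₁ = x := by exact_mod_cast hj1'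
      have e4 : j₂ = y := by exact_mod_cast hj2'
      simp [e1, e2, e3, e4])
end

section
/- Let x, y, x', y' ∈ ℤ with x y' − x' y ≠ 0. Suppose n₁, n₂, j₁, j₂ ∈ ℤ satisfy the four equations: n₁ + n₂ + 1 = 0, j₁² + n₁ x² + n₂ x'² = 0, j₂² + n₁ y² + n₂ y'² = 0, and j₁ j₂ + n₁ x y + n₂ x' y' = 0. Then either (n₁, n₂) = (0, −1) and (j₁, j₂) ∈ {(x', y'), (−x', −y')}, or (n₁, n₂) = (−1, 0) and (j₁, j₂) ∈ {(x, y), (−x, −y)}. -/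
lemma pair_sq_aux (a b c d : ℤ) (h1 : a ^ 2 = c ^ 2) (h2 : b ^ 2 = d ^ 2)
    (h3 : a * b = c * d) : (a = c ∧ b = d) ∨ (a = -c ∧ b = -d) := by
  have ha : (a - c) * (a + c) = 0 := by linear_combination h1
  have hb : (b - d) * (b + d) = 0 := by linear_combination h2
  rcases mul_eq_zero.mp ha with h | h
  · have hac : a = c := by linarith
    rcases eq_or_ne c 0 with hc | hc
    · rcases mul_eq_zero.mp hb with h' | h'
      · exact Or.inl ⟨hac, by linarith⟩
      · exact Or.inr ⟨by rw [hac, hc]; ring, by linarith⟩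
    · left
      refine ⟨hac, ?_⟩
      subst hac
      have : a * (b - d) = 0 := by linear_combination h3
      rcases mul_eq_zero.mp this with h' | h'
      · exact absurd h' hc
      · linarith
  · have hac : a = -c := by linarith
    rcases eq_or_ne c 0 with hc | hc
    · rcases mul_eq_zero.mp hb with h' | h'
      · exact Or.inl ⟨by rw [hac, hc]; ring, by linarith⟩
      · exact Or.inr ⟨hac, by linarith⟩
    · right
      refine ⟨hac, ?_⟩
      subst hac
      have : c * (b + d) = 0 := by linear_combination -h3
      rcases mul_eq_zero.mp this with h' | h'
      · exact absurd h' hc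
      · linarith

/-- The integer solutions of the four coefficient-vanishing equations for
`D(n, j)` with non-parallel `(x, y)`, `(x', y')` are exactly
`(n₁, n₂) = (0, −1)`, `(j₁, j₂) = ±(x', y')` and `(n₁, n₂) = (−1, 0)`, `(j₁, j₂) = ±(x, y)`. -/
theorem stmt_3 (x y x' y' n₁ n₂ j₁ j₂ : ℤ)
    (hnp : x * y' - x' * y ≠ 0)
    (e1 : n₁ + n₂ + 1 = 0)
    (e2 : j₁ ^ 2 + n₁ * x ^ 2 + n₂ * x' ^ 2 = 0)
    (e3 : j₂ ^ 2 + n₁ * y ^ 2 + n₂ * y' ^ 2 = 0)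
    (e4 : j₁ * j₂ + n₁ * x * y + n₂ * x' * y' = 0) :
    ((n₁, n₂) = ((0 : ℤ), (-1 : ℤ)) ∧ ((j₁, j₂) = (x', y') ∨ (j₁, j₂) = (-x', -y'))) ∨
      ((n₁, n₂) = ((-1 : ℤ), (0 : ℤ)) ∧ ((j₁, j₂) = (x, y) ∨ (j₁, j₂) = (-x, -y))) := by
  have key : n₁ * n₂ * (x * y' - x' * y) ^ 2 = 0 := by
    linear_combination (n₁ * x ^ 2 + n₂ * x' ^ 2) * e3 - j₂ ^ 2 * e2 +
      (j₁ * j₂ - (n₁ * x * y + n₂ * x' * y')) * e4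
  have hsq : (x * y' - x' * y) ^ 2 ≠ 0 := pow_ne_zero _ hnp
  have hn : n₁ = 0 ∨ n₂ = 0 := mul_eq_zero.mp ((mul_eq_zero.mp key).resolve_right hsq)
  rcases hn with h1 | h1
  · have h2 : n₂ = -1 := by linarith
    subst h1; subst h2
    left
    refine ⟨rfl, ?_⟩
    have a1 : j₁ ^ 2 = x' ^ 2 := by linear_combination e2
    have a2 : j₂ ^ 2 = y' ^ 2 := by linear_combination e3
    have a3 : j₁ * j₂ = x' * y' := by linear_combination e4
    rcases pair_sq_aux j₁ j₂ x' y' a1 a2 a3 with ⟨h, h'⟩ | ⟨h, h'⟩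
    · exact Or.inl (by rw [h, h'])
    · exact Or.inr (by rw [h, h'])
  · have h2 : n₁ = -1 := by linarith
    subst h1; subst h2
    right
    refine ⟨rfl, ?_⟩
    have a1 : j₁ ^ 2 = x ^ 2 := by linear_combination e2
    have a2 : j₂ ^ 2 = y ^ 2 := by linear_combination e3
    have a3 : j₁ * j₂ = x * y := by linear_combination e4
    rcases pair_sq_aux j₁ j₂ x y a1 a2 a3 with ⟨h, h'⟩ | ⟨h, h'⟩
    · exact Or.inl (by rw [h, h'])
    · exact Or.inr (by rw [h, h'])
end

section
/- Let n ≥ 1 and 0 < L < 1, and let Φ : ℝ → Sym(n, ℝ) be a map into the real symmetric n × n matrices that is L-Lipschitz in the operator norm, i.e. ‖Φ(θ) − Φ(θ')‖_op ≤ L|θ − θ'| for all θ, θ' ∈ ℝ. Then there exist real numbers θ₁, …, θ_n such that for every t > 0 and every θ ∈ ℝ with |θ − θ_i| ≥ t for all i = 1, …, n, the matrix −θ·I + Φ(θ) is invertible and ‖(−θ·I + Φ(θ))^{−1}‖_op ≤ 1/((1 − L) t). -/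
/-!
Weyl's inequality: the `k`-th largest eigenvalue of a Hermitian matrix moves by at most the
operator norm of a perturbation. It follows from a dimension count, since the span of the top
`k + 1` eigenvectors of `A` meets the span of the bottom `n - k` eigenvectors of `B`, and on
that intersection the two Rayleigh quotients are compared directly.

Hence each `θ ↦ λ_i(Φ θ)` is an `L`-contraction of `ℝ`; take `θ_i` to be its fixed point. Then
`|λ_i(Φ θ) - θ| ≥ (1 - L) |θ - θ_i| ≥ (1 - L) t`, so all eigenvalues of the Hermitian matrix
`-θ + Φ θ` have modulus at least `(1 - L) t`, which bounds the norm of its inverse.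
-/

open Module Submodule
open scoped InnerProductSpace

namespace OrthonormalBasis
variable {ι 𝕜 E : Type*} [Fintype ι] [RCLike 𝕜] [NormedAddCommGroup E] [InnerProductSpace 𝕜 E]

lemma norm_sq_eq_sum_norm_sq_repr (b : OrthonormalBasis ι 𝕜 E) (x : E) :
    ‖x‖ ^ 2 = ∑ i, ‖b.repr x i‖ ^ 2 := by
  rw [← b.repr.norm_map, EuclideanSpace.norm_sq_eq]

lemma repr_eq_zero_of_mem_span_image (b : OrthonormalBasis ι 𝕜 E) {s : Set ι} {x : E}
    (hx : x ∈ span 𝕜 (b '' s)) {i : ι} (hi : i ∉ s) : b.repr x i = 0 := by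
  rw [← b.coe_toBasis, b.toBasis.mem_span_image] at hx
  simpa using mt (@hx i) hi

lemma finrank_span_image (b : OrthonormalBasis ι 𝕜 E) (s : Finset ι) :
    finrank 𝕜 (span 𝕜 (b '' s)) = s.card := by
  have hli : LinearIndependent 𝕜 fun i : (s : Set ι) => b i :=
    b.orthonormal.linearIndependent.comp _ Subtype.val_injective
  rw [Set.image_eq_range, finrank_span_eq_card hli]
  simp

end OrthonormalBasis

namespace LinearMap.IsSymmetric
variable {𝕜 E : Type*} [RCLike 𝕜] [NormedAddCommGroup E] [InnerProductSpace 𝕜 E]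
  [FiniteDimensional 𝕜 E] {n : ℕ} (hn : finrank 𝕜 E = n) {T S : E →ₗ[𝕜] E}

lemma re_inner_apply_self_eq_sum (hT : T.IsSymmetric) (x : E) :
    RCLike.re ⟪T x, x⟫_𝕜 =
      ∑ i, hT.eigenvalues hn i * ‖(hT.eigenvectorBasis hn).repr x i‖ ^ 2 := by
  rw [← (hT.eigenvectorBasis hn).repr.inner_map_map, PiLp.inner_apply, map_sum]
  congr 1 with i
  rw [eigenvectorBasis_apply_self_apply, ← smul_eq_mul, inner_smul_left, RCLike.conj_ofReal,
    inner_self_eq_norm_sq_to_K]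
  norm_cast

lemma eigenvalues_mul_norm_sq_le_re_inner (hT : T.IsSymmetric) {k : Fin n} {x : E}
    (hx : x ∈ span 𝕜 (hT.eigenvectorBasis hn '' Set.Iic k)) :
    hT.eigenvalues hn k * ‖x‖ ^ 2 ≤ RCLike.re ⟪T x, x⟫_𝕜 := by
  rw [re_inner_apply_self_eq_sum hn hT, (hT.eigenvectorBasis hn).norm_sq_eq_sum_norm_sq_repr,
    Finset.mul_sum]
  refine Finset.sum_le_sum fun i _ => ?_
  by_cases hi : i ≤ k
  · exact mul_le_mul_of_nonneg_right (hT.eigenvalues_antitone hn hi) (sq_nonneg _)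
  · simp [(hT.eigenvectorBasis hn).repr_eq_zero_of_mem_span_image hx hi]

lemma re_inner_le_eigenvalues_mul_norm_sq (hT : T.IsSymmetric) {k : Fin n} {x : E}
    (hx : x ∈ span 𝕜 (hT.eigenvectorBasis hn '' Set.Ici k)) :
    RCLike.re ⟪T x, x⟫_𝕜 ≤ hT.eigenvalues hn k * ‖x‖ ^ 2 := by
  rw [re_inner_apply_self_eq_sum hn hT, (hT.eigenvectorBasis hn).norm_sq_eq_sum_norm_sq_repr,
    Finset.mul_sum]
  refine Finset.sum_le_sum fun i _ => ?_
  by_cases hi : k ≤ i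
  · exact mul_le_mul_of_nonneg_right (hT.eigenvalues_antitone hn hi) (sq_nonneg _)
  · simp [(hT.eigenvectorBasis hn).repr_eq_zero_of_mem_span_image hx hi]

lemma eigenvalues_le_add_of_re_inner_le (hT : T.IsSymmetric) (hS : S.IsSymmetric) {c : ℝ}
    (h : ∀ x, RCLike.re ⟪T x, x⟫_𝕜 ≤ RCLike.re ⟪S x, x⟫_𝕜 + c * ‖x‖ ^ 2) (k : Fin n) :
    hT.eigenvalues hn k ≤ hS.eigenvalues hn k + c := by
  have hdim : finrank 𝕜 E < finrank 𝕜 (span 𝕜 (hT.eigenvectorBasis hn '' Set.Iic k)) +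
      finrank 𝕜 (span 𝕜 (hS.eigenvectorBasis hn '' Set.Ici k)) := by
    rw [← Finset.coe_Iic, ← Finset.coe_Ici, OrthonormalBasis.finrank_span_image,
      OrthonormalBasis.finrank_span_image, Fin.card_Iic, Fin.card_Ici]
    omega
  set V := span 𝕜 (hT.eigenvectorBasis hn '' Set.Iic k)
  set W := span 𝕜 (hS.eigenvectorBasis hn '' Set.Ici k)
  obtain ⟨x, ⟨hxV, hxW⟩, hx⟩ : ∃ x ∈ V ⊓ W, x ≠ 0 :=
    (Submodule.ne_bot_iff _).mp <| disjoint_iff.not.mp fun hVW =>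
      (Submodule.finrank_add_finrank_le_of_disjoint hVW).not_gt hdim
  have hx2 : 0 < ‖x‖ ^ 2 := by positivity
  have := eigenvalues_mul_norm_sq_le_re_inner hn hT hxV
  have := re_inner_le_eigenvalues_mul_norm_sq hn hS hxW
  nlinarith [h x]

lemma mul_norm_le_norm_sub_smul (hT : T.IsSymmetric) {θ δ : ℝ} (hδ : 0 ≤ δ)
    (h : ∀ i, δ ≤ |hT.eigenvalues hn i - θ|) (x : E) :
    δ * ‖x‖ ≤ ‖T x - (θ : 𝕜) • x‖ := by
  set b := hT.eigenvectorBasis hn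
  have key : (δ * ‖x‖) ^ 2 ≤ ‖T x - (θ : 𝕜) • x‖ ^ 2 := by
    rw [mul_pow, b.norm_sq_eq_sum_norm_sq_repr, b.norm_sq_eq_sum_norm_sq_repr, Finset.mul_sum]
    refine Finset.sum_le_sum fun i _ => ?_
    rw [map_sub, map_smul, PiLp.sub_apply, PiLp.smul_apply, eigenvectorBasis_apply_self_apply,
      smul_eq_mul, ← sub_mul, norm_mul, mul_pow, ← RCLike.ofReal_sub, RCLike.norm_ofReal]
    gcongr
    exact h i
  exact (pow_le_pow_iff_left₀ (by positivity) (norm_nonneg _) two_ne_zero).mp key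

end LinearMap.IsSymmetric

namespace Matrix
variable {𝕜 m : Type*} [RCLike 𝕜] [Fintype m] [DecidableEq m]

lemma isUnit_and_norm_toEuclideanCLM_inv_le {M : Matrix m m 𝕜} {δ : ℝ} (hδ : 0 < δ)
    (h : ∀ x, δ * ‖x‖ ≤ ‖toEuclideanCLM (𝕜 := 𝕜) M x‖) :
    IsUnit M ∧ ‖toEuclideanCLM (𝕜 := 𝕜) M⁻¹‖ ≤ δ⁻¹ := by
  have hM : IsUnit M := by
    refine mulVec_injective_iff_isUnit.mp fun v w hvw => ?_
    have := h (WithLp.toLp 2 (v - w))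
    rw [toEuclideanCLM_toLp, mulVec_sub, hvw, sub_self, WithLp.toLp_zero, norm_zero,
      mul_nonpos_iff_pos_imp_nonpos] at this
    simpa [sub_eq_zero] using this.1 hδ
  refine ⟨hM, ContinuousLinearMap.opNorm_le_bound _ (inv_nonneg.2 hδ.le) fun y => ?_⟩
  have hy := h (toEuclideanCLM (𝕜 := 𝕜) M⁻¹ y)
  have hMM : toEuclideanCLM (𝕜 := 𝕜) M (toEuclideanCLM (𝕜 := 𝕜) M⁻¹ y) = y := by
    change (toEuclideanCLM (𝕜 := 𝕜) M * toEuclideanCLM (𝕜 := 𝕜) M⁻¹) y = y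
    rw [← map_mul, mul_nonsing_inv _ ((isUnit_iff_isUnit_det M).mp hM), map_one]
    rfl
  rw [hMM] at hy
  rw [inv_mul_eq_div, le_div_iff₀ hδ, mul_comm]
  exact hy

namespace IsHermitian

/-- Both `eigenvalues` are the decreasingly sorted ones, reindexed along the same fixed
equivalence `Fin (card m) ≃ m`, so `j` denotes the same rank for `A` and for `B`. -/
lemma eigenvalues_le_eigenvalues_add_norm_sub {A B : Matrix m m 𝕜} (hA : A.IsHermitian)
    (hB : B.IsHermitian) (j : m) :
    hA.eigenvalues j ≤ hB.eigenvalues j + ‖toEuclideanCLM (𝕜 := 𝕜) (A - B)‖ := by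
  refine LinearMap.IsSymmetric.eigenvalues_le_add_of_re_inner_le _ _ _ (fun x => ?_) _
  have hx : RCLike.re ⟪toEuclideanCLM (𝕜 := 𝕜) (A - B) x, x⟫_𝕜 ≤
      ‖toEuclideanCLM (𝕜 := 𝕜) (A - B)‖ * ‖x‖ ^ 2 :=
    calc _ ≤ ‖toEuclideanCLM (𝕜 := 𝕜) (A - B) x‖ * ‖x‖ := re_inner_le_norm _ _
      _ ≤ _ := by rw [sq, ← mul_assoc]; gcongr; exact ContinuousLinearMap.le_opNorm _ _
  have happly : toEuclideanCLM (𝕜 := 𝕜) (A - B) x =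
      toEuclideanCLM (𝕜 := 𝕜) A x - toEuclideanCLM (𝕜 := 𝕜) B x := by
    rw [map_sub]; rfl
  rw [happly, inner_sub_left, map_sub] at hx
  change RCLike.re ⟪toEuclideanCLM (𝕜 := 𝕜) A x, x⟫_𝕜 ≤
    RCLike.re ⟪toEuclideanCLM (𝕜 := 𝕜) B x, x⟫_𝕜 + _
  linarith

lemma abs_eigenvalues_sub_le {A B : Matrix m m 𝕜} (hA : A.IsHermitian) (hB : B.IsHermitian)
    (j : m) : |hA.eigenvalues j - hB.eigenvalues j| ≤ ‖toEuclideanCLM (𝕜 := 𝕜) (A - B)‖ := by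
  have hBA := hB.eigenvalues_le_eigenvalues_add_norm_sub hA j
  rw [← neg_sub, map_neg, norm_neg] at hBA
  rw [abs_sub_le_iff]
  constructor <;> linarith [hA.eigenvalues_le_eigenvalues_add_norm_sub hB j]

lemma isUnit_and_norm_inv_le {A : Matrix m m 𝕜} (hA : A.IsHermitian) {θ δ : ℝ} (hδ : 0 < δ)
    (h : ∀ j, δ ≤ |hA.eigenvalues j - θ|) :
    IsUnit ((-θ) • (1 : Matrix m m 𝕜) + A) ∧
      ‖toEuclideanCLM (𝕜 := 𝕜) (((-θ) • (1 : Matrix m m 𝕜) + A)⁻¹)‖ ≤ δ⁻¹ := by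
  refine isUnit_and_norm_toEuclideanCLM_inv_le hδ fun x => ?_
  have hgap (k : Fin (Fintype.card m)) : δ ≤ |hA.eigenvalues₀ k - θ| := by
    simpa [eigenvalues] using h (Fintype.equivOfCardEq (Fintype.card_fin _) k)
  have := (isSymmetric_toEuclideanLin_iff.mpr hA).mul_norm_le_norm_sub_smul finrank_euclideanSpace
    hδ.le hgap x
  have happly : toEuclideanCLM (𝕜 := 𝕜) ((-θ) • (1 : Matrix m m 𝕜) + A) x =
      toEuclideanLin A x - (θ : 𝕜) • x := by
    ext i
    simp [sub_eq_neg_add, smul_mulVec]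
  rwa [happly]

end IsHermitian
end Matrix

theorem stmt_14_general (n : ℕ) (L : ℝ) (hL0 : 0 < L) (hL1 : L < 1)
    (Φ : ℝ → Matrix (Fin n) (Fin n) ℝ)
    (hsymm : ∀ θ, (Φ θ).IsSymm)
    (hlip : ∀ θ θ' : ℝ,
      ‖Matrix.toEuclideanCLM (𝕜 := ℝ) (Φ θ - Φ θ')‖ ≤ L * |θ - θ'|) :
    ∃ θs : Fin n → ℝ, ∀ t : ℝ, 0 < t → ∀ θ : ℝ, (∀ i, t ≤ |θ - θs i|) →
      IsUnit ((-θ) • (1 : Matrix (Fin n) (Fin n) ℝ) + Φ θ) ∧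
      ‖Matrix.toEuclideanCLM (𝕜 := ℝ)
          (((-θ) • (1 : Matrix (Fin n) (Fin n) ℝ) + Φ θ)⁻¹)‖ ≤ 1 / ((1 - L) * t) := by
  have hΦ (θ : ℝ) : (Φ θ).IsHermitian := Matrix.isHermitian_iff_isSymm.mpr (hsymm θ)
  have hcontr (i : Fin n) : ContractingWith ⟨L, hL0.le⟩ fun θ => (hΦ θ).eigenvalues i :=
    ⟨by exact_mod_cast hL1, LipschitzWith.of_dist_le_mul fun θ θ' =>
      ((hΦ θ).abs_eigenvalues_sub_le (hΦ θ') i).trans (hlip θ θ')⟩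
  refine ⟨fun i => (hcontr i).fixedPoint, fun t ht θ hfar => ?_⟩
  have hgap (i : Fin n) : (1 - L) * t ≤ |(hΦ θ).eigenvalues i - θ| := by
    have : t ≤ |θ - (hΦ θ).eigenvalues i| / (1 - L) :=
      (hfar i).trans ((hcontr i).dist_fixedPoint_le θ)
    rwa [le_div_iff₀ (sub_pos.mpr hL1), abs_sub_comm, mul_comm] at this
  rw [one_div]
  exact (hΦ θ).isUnit_and_norm_inv_le (mul_pos (sub_pos.mpr hL1) ht) hgap

/-- **Lipschitz eigenvalue-variation principle.** If `θ ↦ Φ(θ)` is an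
`L`-Lipschitz (in operator norm) family of real symmetric `n × n` matrices with `L < 1`, then
there are `θ₁, …, θ_n` such that away from `t`-neighborhoods of the `θ_i`, the matrix
`−θ·I + Φ(θ)` is invertible with inverse of operator norm at most `1/((1 − L)t)`. -/
theorem stmt_14 (n : ℕ) (hn : 1 ≤ n) (L : ℝ) (hL0 : 0 < L) (hL1 : L < 1)
    (Φ : ℝ → Matrix (Fin n) (Fin n) ℝ)
    (hsymm : ∀ θ, (Φ θ).IsSymm)
    (hlip : ∀ θ θ' : ℝ,
      ‖Matrix.toEuclideanCLM (𝕜 := ℝ) (Φ θ - Φ θ')‖ ≤ L * |θ - θ'|) :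
    ∃ θs : Fin n → ℝ, ∀ t : ℝ, 0 < t → ∀ θ : ℝ, (∀ i, t ≤ |θ - θs i|) →
      IsUnit ((-θ) • (1 : Matrix (Fin n) (Fin n) ℝ) + Φ θ) ∧
      ‖Matrix.toEuclideanCLM (𝕜 := ℝ)
          (((-θ) • (1 : Matrix (Fin n) (Fin n) ℝ) + Φ θ)⁻¹)‖ ≤ 1 / ((1 - L) * t) :=
  stmt_14_general n L hL0 hL1 Φ hsymm hlip
end

section
/- Let p ≥ 1 be an integer, let h₁, h₂ ∈ ℤ² \ {0} be non-parallel, and let A ≥ 2 be an integer. For (n, j) ∈ ℤ² × ℤ² define D(n, j)(λ₁, λ₂, m, M) = n₁[(h₁·λ + m)² + M] + n₂[(h₂·λ + m)² + M] + (j·λ + m)² + M, where λ = (λ₁, λ₂). Then there exists δ₀ ∈ (0, 1) such that for all δ ∈ (0, δ₀), setting R = ⌊|log δ|^{3/4}⌋ and N = A^R, the set of (λ, m, M) ∈ (0, 2π)⁴ for which there exists (n, j) ∈ ([−N, N]⁴ ∩ ℤ⁴) \ {(−e₁, h₁), (−e₂, h₂)} with |D(n, j)(λ, m, M)| ≤ 2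 δ^{p/2} has Lebesgue measure less than δ^{p/5}. -/
/-!
Each `D(n, j)` is `Q(λ) + 2m (b · λ) + c (m² + M)` with integer coefficients (`Q` a binary
quadratic form), and these coefficients all vanish only at the two excluded pairs, because
`h₁, h₂` are linearly independent. A nonzero polynomial of this shape has modulus `≤ ε` on a
subset of the box of measure `O(√ε)`, by slicing along one variable: along `M` if `c ≠ 0`, along
`λ₁` or `λ₂` if `Q` has a nonzero diagonal coefficient (a quadratic with integer leading
coefficient), and in the remaining bilinear case `x L + R` along `x` where `|L| > √ε` and along a
variable of `L` where `|L| ≤ √ε`. Summing over the `(2N + 1)⁴` pairs costs a factor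
`A^{4R} = exp(O(|log δ|^{3/4}))`, which is negligible against `δ^{p/4 - p/5}`.
-/

open MeasureTheory Real Set Filter Topology
open scoped ENNReal

lemma volume_abs_mul_add_le {b c ε κ : ℝ} (hε : 0 ≤ ε) (hκ : 0 < κ) (hb : κ ≤ |b|) :
    volume {t : ℝ | |b * t + c| ≤ ε} ≤ ENNReal.ofReal (2 * ε / κ) := by
  have hb0 : b ≠ 0 := abs_pos.mp (hκ.trans_le hb)
  have hsub : {t : ℝ | |b * t + c| ≤ ε} ⊆ Icc (-(c / b) - ε / κ) (-(c / b) + ε / κ) := by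
    intro t ht
    have : |t + c / b| ≤ ε / κ := calc
      |t + c / b| = |b * t + c| / |b| := by rw [← abs_div]; congr 1; field_simp
      _ ≤ ε / κ := div_le_div₀ hε ht hκ hb
    constructor <;> linarith [abs_le.mp this]
  calc _ ≤ volume (Icc (-(c / b) - ε / κ) (-(c / b) + ε / κ)) := measure_mono hsub
    _ = ENNReal.ofReal (2 * ε / κ) := by rw [Real.volume_Icc]; ring_nf

lemma volume_abs_mul_add_le_of_one_le_abs {b c ε : ℝ} (hε : 0 ≤ ε) (hb : 1 ≤ |b|) :
    volume {t : ℝ | |b * t + c| ≤ ε} ≤ ENNReal.ofReal (2 * ε) := by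
  simpa using volume_abs_mul_add_le (c := c) hε one_pos hb

lemma volume_abs_mul_add_le_of_sqrt_lt_abs {b c ε : ℝ} (hε : 0 < ε) :
    volume {t : ℝ | √ε < |b| ∧ |b * t + c| ≤ ε} ≤ ENNReal.ofReal (2 * √ε) := by
  by_cases hb : √ε < |b|
  · calc _ ≤ volume {t : ℝ | |b * t + c| ≤ ε} := measure_mono fun t ht => ht.2
      _ ≤ ENNReal.ofReal (2 * ε / √ε) := volume_abs_mul_add_le hε.le (sqrt_pos.2 hε) hb.le
      _ = ENNReal.ofReal (2 * √ε) := by rw [mul_div_assoc, Real.div_sqrt]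
  · simp [hb]

lemma volume_abs_sq_sub_le {e η : ℝ} (hη : 0 ≤ η) :
    volume {u : ℝ | |u ^ 2 - e| ≤ η} ≤ ENNReal.ofReal (4 * √η) := by
  set r := √(e + η)
  set s := √(e - η)
  have hsr : s ≤ r := Real.sqrt_le_sqrt (by linarith)
  have hs : e - η ≤ s ^ 2 := by
    rcases le_total 0 (e - η) with h | h
    · rw [Real.sq_sqrt h]
    · simpa [s, Real.sqrt_eq_zero_of_nonpos h] using h
  -- `(s + 2√η)² ≥ s² + 4η ≥ e + η`
  have hrs : r ≤ s + 2 * √η := by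
    rw [Real.sqrt_le_left (by positivity)]
    nlinarith [Real.sq_sqrt hη, Real.sqrt_nonneg η, Real.sqrt_nonneg (e - η)]
  have hsub : {u : ℝ | |u ^ 2 - e| ≤ η} ⊆ Icc (-r) (-s) ∪ Icc s r := by
    intro u hu
    rw [mem_ofPred_eq, abs_le] at hu
    have hlo : s ≤ |u| := by
      rw [← Real.sqrt_sq_eq_abs]; exact Real.sqrt_le_sqrt (by linarith)
    have hhi : |u| ≤ r := by
      rw [← Real.sqrt_sq_eq_abs]; exact Real.sqrt_le_sqrt (by linarith)
    rcases le_total 0 u with hu0 | hu0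
    · rw [abs_of_nonneg hu0] at hlo hhi
      exact Or.inr ⟨hlo, hhi⟩
    · rw [abs_of_nonpos hu0] at hlo hhi
      exact Or.inl ⟨by linarith, by linarith⟩
  calc _ ≤ volume (Icc (-r) (-s) ∪ Icc s r) := measure_mono hsub
    _ ≤ volume (Icc (-r) (-s)) + volume (Icc s r) := measure_union_le _ _
    _ = ENNReal.ofReal (2 * (r - s)) := by
        rw [Real.volume_Icc, Real.volume_Icc, ← ENNReal.ofReal_add (by linarith) (by linarith)]
        ring_nf
    _ ≤ ENNReal.ofReal (4 * √η) := ENNReal.ofReal_le_ofReal (by linarith)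

lemma volume_abs_quadratic_le {a b c ε : ℝ} (ha : a ≠ 0) (hε : 0 ≤ ε) :
    volume {t : ℝ | |a * t ^ 2 + b * t + c| ≤ ε} ≤ ENNReal.ofReal (4 * √(ε / |a|)) := by
  set x₀ := b / (2 * a)
  have hsub : {t : ℝ | |a * t ^ 2 + b * t + c| ≤ ε} ⊆
      (· + x₀) ⁻¹' {u | |u ^ 2 - (x₀ ^ 2 - c / a)| ≤ ε / |a|} := by
    intro t ht
    have key : a * t ^ 2 + b * t + c = a * ((t + x₀) ^ 2 - (x₀ ^ 2 - c / a)) := by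
      simp only [x₀]; field_simp; ring
    rw [mem_ofPred_eq, key, abs_mul] at ht
    rw [mem_preimage, mem_ofPred_eq, le_div_iff₀ (abs_pos.mpr ha)]
    linarith
  calc _ ≤ _ := measure_mono hsub
    _ = _ := measure_preimage_add_right _ _ _
    _ ≤ _ := volume_abs_sq_sub_le (by positivity)

lemma volume_abs_quadratic_le_of_one_le_abs {a b c ε : ℝ} (ha : 1 ≤ |a|) (hε : 0 ≤ ε) :
    volume {t : ℝ | |a * t ^ 2 + b * t + c| ≤ ε} ≤ ENNReal.ofReal (4 * √ε) := by
  refine (volume_abs_quadratic_le (abs_pos.1 (one_pos.trans_le ha)) hε).trans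
    (ENNReal.ofReal_le_ofReal ?_)
  gcongr
  exact div_le_self hε ha

section Slicing

variable {α β : Type*} [MeasurableSpace α] [MeasurableSpace β] {μ : Measure α} {ν : Measure β}
  {s : Set (α × β)} {C : ℝ≥0∞}

lemma prod_apply_le_of_preimage_prodMk_left_le [SFinite ν] (hs : MeasurableSet s) {A : Set α}
    (hA : MeasurableSet A) (hsA : s ⊆ A ×ˢ univ) (h : ∀ x, ν (Prod.mk x ⁻¹' s) ≤ C) :
    μ.prod ν s ≤ μ A * C := by
  have hslice : ∀ x, ν (Prod.mk x ⁻¹' s) ≤ A.indicator (fun _ => C) x := by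
    intro x
    by_cases hx : x ∈ A
    · simpa [hx] using h x
    · have : Prod.mk x ⁻¹' s = ∅ := eq_empty_of_forall_notMem fun y hy => hx (hsA hy).1
      simp [this]
  calc μ.prod ν s = ∫⁻ x, ν (Prod.mk x ⁻¹' s) ∂μ := Measure.prod_apply hs
    _ ≤ ∫⁻ x, A.indicator (fun _ => C) x ∂μ := lintegral_mono hslice
    _ = μ A * C := by rw [lintegral_indicator_const hA, mul_comm]

lemma prod_apply_le_of_preimage_prodMk_right_le [SFinite μ] [SFinite ν] (hs : MeasurableSet s)
    {B : Set β} (hB : MeasurableSet B) (hsB : s ⊆ univ ×ˢ B)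
    (h : ∀ y, μ ((fun x => (x, y)) ⁻¹' s) ≤ C) :
    μ.prod ν s ≤ C * ν B := by
  rw [← Measure.prod_swap, Measure.map_apply measurable_swap hs, mul_comm]
  exact prod_apply_le_of_preimage_prodMk_left_le (measurable_swap hs) hB
    (fun p hp => ⟨(hsB hp).2, trivial⟩) h

end Slicing

section Box

variable {B : Set ℝ} {s : Set (ℝ × ℝ × ℝ × ℝ)} {C : ℝ≥0∞}

lemma volume_prod_self (B : Set ℝ) : volume (B ×ˢ B) = volume B ^ 2 := by
  rw [Measure.volume_eq_prod, Measure.prod_prod, sq]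

lemma volume_le_of_slice₁_le (hB : MeasurableSet B) (hs : MeasurableSet s)
    (hsB : s ⊆ B ×ˢ B ×ˢ B ×ˢ B) (h : ∀ y z w, volume {x | (x, y, z, w) ∈ s} ≤ C) :
    volume s ≤ volume B ^ 3 * C := by
  have hB3 : volume (B ×ˢ B ×ˢ B) = volume B ^ 3 := by
    rw [Measure.volume_eq_prod, Measure.prod_prod, volume_prod_self]; ring
  rw [Measure.volume_eq_prod, ← hB3, mul_comm]
  exact prod_apply_le_of_preimage_prodMk_right_le hs (hB.prod (hB.prod hB))
    (fun q hq => ⟨trivial, (hsB hq).2⟩) fun r => h r.1 r.2.1 r.2.2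

lemma volume_le_of_slice₂_le (hB : MeasurableSet B) (hs : MeasurableSet s)
    (hsB : s ⊆ B ×ˢ B ×ˢ B ×ˢ B) (h : ∀ x z w, volume {y | (x, y, z, w) ∈ s} ≤ C) :
    volume s ≤ volume B ^ 3 * C := by
  rw [Measure.volume_eq_prod]
  calc _ ≤ volume B * (C * volume (B ×ˢ B)) :=
        prod_apply_le_of_preimage_prodMk_left_le hs hB (fun q hq => ⟨(hsB hq).1, trivial⟩)
          fun x => prod_apply_le_of_preimage_prodMk_right_le (measurable_prodMk_left hs)
            (hB.prod hB) (fun r hr => ⟨trivial, (hsB hr).2.2⟩) fun zw => h x zw.1 zw.2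
    _ = volume B ^ 3 * C := by rw [volume_prod_self]; ring

lemma volume_le_of_slice₃_le (hB : MeasurableSet B) (hs : MeasurableSet s)
    (hsB : s ⊆ B ×ˢ B ×ˢ B ×ˢ B) (h : ∀ x y w, volume {z | (x, y, z, w) ∈ s} ≤ C) :
    volume s ≤ volume B ^ 3 * C := by
  rw [Measure.volume_eq_prod]
  calc _ ≤ volume B * (volume B * (C * volume B)) :=
        prod_apply_le_of_preimage_prodMk_left_le hs hB (fun q hq => ⟨(hsB hq).1, trivial⟩)
          fun x => prod_apply_le_of_preimage_prodMk_left_le (measurable_prodMk_left hs) hB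
            (fun r hr => ⟨(hsB hr).2.1, trivial⟩)
            fun y => prod_apply_le_of_preimage_prodMk_right_le
              (measurable_prodMk_left (measurable_prodMk_left hs)) hB
              (fun r hr => ⟨trivial, (hsB hr).2.2.2⟩) fun w => h x y w
    _ = volume B ^ 3 * C := by ring

lemma volume_le_of_slice₄_le (hB : MeasurableSet B) (hs : MeasurableSet s)
    (hsB : s ⊆ B ×ˢ B ×ˢ B ×ˢ B) (h : ∀ x y z, volume {w | (x, y, z, w) ∈ s} ≤ C) :
    volume s ≤ volume B ^ 3 * C := by
  rw [Measure.volume_eq_prod]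
  calc _ ≤ volume B * (volume B * (volume B * C)) :=
        prod_apply_le_of_preimage_prodMk_left_le hs hB (fun q hq => ⟨(hsB hq).1, trivial⟩)
          fun x => prod_apply_le_of_preimage_prodMk_left_le (measurable_prodMk_left hs) hB
            (fun r hr => ⟨(hsB hr).2.1, trivial⟩)
            fun y => prod_apply_le_of_preimage_prodMk_left_le
              (measurable_prodMk_left (measurable_prodMk_left hs)) hB
              (fun r hr => ⟨(hsB hr).2.2.1, trivial⟩) fun z => h x y z
    _ = volume B ^ 3 * C := by ring

end Box

lemma one_le_abs_intCast {k : ℤ} (hk : k ≠ 0) : (1 : ℝ) ≤ |(k : ℝ)| := by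
  rw [← Int.cast_abs]; exact_mod_cast Int.one_le_abs hk

lemma one_le_abs_two_mul_intCast {k : ℤ} (hk : k ≠ 0) : (1 : ℝ) ≤ |2 * (k : ℝ)| := by
  rw [abs_mul, abs_two]; linarith [one_le_abs_intCast hk]

/-- `Q(λ) + 2m (b · λ) + c (m² + M)` at `q = (λ₁, λ₂, m, M)`. -/
def quadPoly (a₁₁ a₁₂ a₂₂ b₁ b₂ c : ℤ) (q : ℝ × ℝ × ℝ × ℝ) : ℝ :=
  a₁₁ * q.1 ^ 2 + 2 * a₁₂ * q.1 * q.2.1 + a₂₂ * q.2.1 ^ 2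
    + 2 * q.2.2.1 * (b₁ * q.1 + b₂ * q.2.1) + c * (q.2.2.1 ^ 2 + q.2.2.2)

lemma continuous_quadPoly (a₁₁ a₁₂ a₂₂ b₁ b₂ c : ℤ) :
    Continuous (quadPoly a₁₁ a₁₂ a₂₂ b₁ b₂ c) := by
  unfold quadPoly; fun_prop

lemma measurableSet_box_abs_le {B : Set ℝ} (hB : MeasurableSet B) {f : ℝ × ℝ × ℝ × ℝ → ℝ}
    (hf : Continuous f) (η : ℝ) :
    MeasurableSet {q | q ∈ B ×ˢ B ×ˢ B ×ˢ B ∧ |f q| ≤ η} :=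
  (hB.prod (hB.prod (hB.prod hB))).inter (measurableSet_le hf.abs.measurable measurable_const)

section QuadPoly

variable {B : Set ℝ} {ε : ℝ}

lemma volume_abs_quadPoly_bilinear_le (hB : MeasurableSet B) {a₁₂ b₁ : ℤ} (hne : a₁₂ ≠ 0 ∨ b₁ ≠ 0)
    (b₂ : ℤ) (hε : 0 < ε) :
    volume {q | q ∈ B ×ˢ B ×ˢ B ×ˢ B ∧ |quadPoly 0 a₁₂ 0 b₁ b₂ 0 q| ≤ ε}
      ≤ volume B ^ 3 * ENNReal.ofReal (4 * √ε) := by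
  set S := {q | q ∈ B ×ˢ B ×ˢ B ×ˢ B ∧ |quadPoly 0 a₁₂ 0 b₁ b₂ 0 q| ≤ ε}
  have hS : MeasurableSet S := measurableSet_box_abs_le hB (continuous_quadPoly ..) ε
  have hsqrt := Real.sqrt_nonneg ε
  rw [show 4 * √ε = 2 * √ε + 2 * √ε by ring, ENNReal.ofReal_add (by positivity) (by positivity),
    mul_add]
  -- The polynomial is `λ₁ L + R` with `L = 2a₁₂λ₂ + 2b₁m`: slice along a variable of `L` where
  -- `|L| ≤ √ε`, and along `λ₁` where `|L| > √ε`.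
  set T := {q : ℝ × ℝ × ℝ × ℝ | |2 * a₁₂ * q.2.1 + 2 * b₁ * q.2.2.1| ≤ √ε}
  have hT : MeasurableSet T := measurableSet_le (by fun_prop) measurable_const
  refine (measure_le_inter_add_sdiff _ S T).trans (add_le_add ?_ ?_)
  · rcases hne with ha | hb
    · refine volume_le_of_slice₂_le hB (hS.inter hT) (fun q hq => hq.1.1) fun x z w => ?_
      refine (measure_mono fun y hy => ?_).trans (volume_abs_mul_add_le_of_one_le_abs
        (c := 2 * b₁ * z) hsqrt (one_le_abs_two_mul_intCast ha))
      simpa [T, mul_assoc] using hy.2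
    · refine volume_le_of_slice₃_le hB (hS.inter hT) (fun q hq => hq.1.1) fun x y w => ?_
      refine (measure_mono fun z hz => ?_).trans (volume_abs_mul_add_le_of_one_le_abs
        (c := 2 * a₁₂ * y) hsqrt (one_le_abs_two_mul_intCast hb))
      have := hz.2
      simp only [T, mem_ofPred_eq] at this ⊢
      rwa [add_comm]
  · refine volume_le_of_slice₁_le hB (hS.diff hT) (fun q hq => hq.1.1) fun y z w => ?_
    refine le_trans (measure_mono fun x hx => ?_) (volume_abs_mul_add_le_of_sqrt_lt_abs
      (b := 2 * a₁₂ * y + 2 * b₁ * z) (c := 2 * b₂ * y * z) hε)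
    refine ⟨not_le.1 hx.2, ?_⟩
    have := hx.1.2
    simp only [quadPoly, Int.cast_zero] at this
    convert this using 2; ring

lemma volume_abs_quadPoly_monomial_le (hB : MeasurableSet B) {b₂ : ℤ} (hb : b₂ ≠ 0)
    (hε : 0 < ε) :
    volume {q | q ∈ B ×ˢ B ×ˢ B ×ˢ B ∧ |quadPoly 0 0 0 0 b₂ 0 q| ≤ ε}
      ≤ volume B ^ 3 * ENNReal.ofReal (4 * √ε) := by
  set S := {q | q ∈ B ×ˢ B ×ˢ B ×ˢ B ∧ |quadPoly 0 0 0 0 b₂ 0 q| ≤ ε}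
  have hS : MeasurableSet S := measurableSet_box_abs_le hB (continuous_quadPoly ..) ε
  have hsqrt := Real.sqrt_nonneg ε
  rw [show 4 * √ε = 2 * √ε + 2 * √ε by ring, ENNReal.ofReal_add (by positivity) (by positivity),
    mul_add]
  set T := {q : ℝ × ℝ × ℝ × ℝ | |2 * b₂ * q.2.2.1| ≤ √ε}
  have hT : MeasurableSet T := measurableSet_le (by fun_prop) measurable_const
  refine (measure_le_inter_add_sdiff _ S T).trans (add_le_add ?_ ?_)
  · refine volume_le_of_slice₃_le hB (hS.inter hT) (fun q hq => hq.1.1) fun x y w => ?_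
    refine (measure_mono fun z hz => ?_).trans (volume_abs_mul_add_le_of_one_le_abs
      (c := 0) hsqrt (one_le_abs_two_mul_intCast hb))
    simpa [T] using hz.2
  · refine volume_le_of_slice₂_le hB (hS.diff hT) (fun q hq => hq.1.1) fun x z w => ?_
    refine le_trans (measure_mono fun y hy => ?_)
      (volume_abs_mul_add_le_of_sqrt_lt_abs (b := 2 * b₂ * z) (c := 0) hε)
    refine ⟨not_le.1 hy.2, ?_⟩
    have := hy.1.2
    simp only [quadPoly, Int.cast_zero] at this
    convert this using 2; ring

lemma volume_abs_quadPoly_le_of_ne_zero (hB : MeasurableSet B) (a₁₁ a₁₂ a₂₂ b₁ b₂ : ℤ) {c : ℤ}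
    (hc : c ≠ 0) (hε : 0 ≤ ε) :
    volume {q | q ∈ B ×ˢ B ×ˢ B ×ˢ B ∧ |quadPoly a₁₁ a₁₂ a₂₂ b₁ b₂ c q| ≤ ε}
      ≤ volume B ^ 3 * ENNReal.ofReal (2 * ε) := by
  refine volume_le_of_slice₄_le hB (measurableSet_box_abs_le hB (continuous_quadPoly ..) ε)
    (fun q hq => hq.1) fun x y z => ?_
  refine (measure_mono fun w hw => ?_).trans (volume_abs_mul_add_le_of_one_le_abs
    (c := quadPoly a₁₁ a₁₂ a₂₂ b₁ b₂ c (x, y, z, 0)) hε (one_le_abs_intCast hc))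
  have := hw.2
  simp only [quadPoly, mem_ofPred_eq] at this ⊢
  convert this using 2; ring

theorem volume_abs_quadPoly_le (hB : MeasurableSet B) {a₁₁ a₁₂ a₂₂ b₁ b₂ c : ℤ}
    (hne : (a₁₁, a₁₂, a₂₂, b₁, b₂, c) ≠ 0) (hε : 0 < ε) :
    volume {q | q ∈ B ×ˢ B ×ˢ B ×ˢ B ∧ |quadPoly a₁₁ a₁₂ a₂₂ b₁ b₂ c q| ≤ ε}
      ≤ volume B ^ 3 * ENNReal.ofReal (4 * √ε + 2 * ε) := by
  have hS := measurableSet_box_abs_le hB (continuous_quadPoly a₁₁ a₁₂ a₂₂ b₁ b₂ c) ε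
  have hsqrt := Real.sqrt_nonneg ε
  by_cases hc : c ≠ 0
  · exact (volume_abs_quadPoly_le_of_ne_zero hB _ _ _ _ _ hc hε.le).trans (by gcongr; linarith)
  obtain rfl : c = 0 := not_not.1 hc
  by_cases ha₁₁ : a₁₁ ≠ 0
  · refine (volume_le_of_slice₁_le (C := ENNReal.ofReal (4 * √ε)) hB hS (fun q hq => hq.1)
      fun y z w => ?_).trans (by gcongr; linarith)
    refine (measure_mono fun x hx => ?_).trans (volume_abs_quadratic_le_of_one_le_abs
      (b := 2 * a₁₂ * y + 2 * z * b₁) (c := a₂₂ * y ^ 2 + 2 * z * b₂ * y)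
      (one_le_abs_intCast ha₁₁) hε.le)
    have := hx.2
    simp only [quadPoly, mem_ofPred_eq, Int.cast_zero] at this ⊢
    convert this using 2; ring
  obtain rfl : a₁₁ = 0 := not_not.1 ha₁₁
  by_cases ha₂₂ : a₂₂ ≠ 0
  · refine (volume_le_of_slice₂_le (C := ENNReal.ofReal (4 * √ε)) hB hS (fun q hq => hq.1)
      fun x z w => ?_).trans (by gcongr; linarith)
    refine (measure_mono fun y hy => ?_).trans (volume_abs_quadratic_le_of_one_le_abs
      (b := 2 * a₁₂ * x + 2 * z * b₂) (c := 2 * z * b₁ * x) (one_le_abs_intCast ha₂₂) hε.le)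
    have := hy.2
    simp only [quadPoly, mem_ofPred_eq, Int.cast_zero] at this ⊢
    convert this using 2; ring
  obtain rfl : a₂₂ = 0 := not_not.1 ha₂₂
  by_cases hL : a₁₂ ≠ 0 ∨ b₁ ≠ 0
  · exact (volume_abs_quadPoly_bilinear_le hB hL b₂ hε).trans (by gcongr; linarith)
  obtain ⟨rfl, rfl⟩ : a₁₂ = 0 ∧ b₁ = 0 := by tauto
  exact (volume_abs_quadPoly_monomial_le hB (fun h => hne (by simp [h])) hε).trans
    (by gcongr; linarith)

end QuadPoly

/-- `D(n, j)` at `q = (λ₁, λ₂, m, M)`. -/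
def diagEntry (h₁ h₂ n j : ℤ × ℤ) (q : ℝ × ℝ × ℝ × ℝ) : ℝ :=
  (n.1 : ℝ) * (((h₁.1 : ℝ) * q.1 + (h₁.2 : ℝ) * q.2.1 + q.2.2.1) ^ 2 + q.2.2.2)
    + (n.2 : ℝ) * (((h₂.1 : ℝ) * q.1 + (h₂.2 : ℝ) * q.2.1 + q.2.2.1) ^ 2 + q.2.2.2)
    + ((j.1 : ℝ) * q.1 + (j.2 : ℝ) * q.2.1 + q.2.2.1) ^ 2 + q.2.2.2

lemma diagEntry_eq_quadPoly (h₁ h₂ n j : ℤ × ℤ) :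
    diagEntry h₁ h₂ n j = quadPoly
      (n.1 * h₁.1 ^ 2 + n.2 * h₂.1 ^ 2 + j.1 ^ 2)
      (n.1 * h₁.1 * h₁.2 + n.2 * h₂.1 * h₂.2 + j.1 * j.2)
      (n.1 * h₁.2 ^ 2 + n.2 * h₂.2 ^ 2 + j.2 ^ 2) (n.1 * h₁.1 + n.2 * h₂.1 + j.1)
      (n.1 * h₁.2 + n.2 * h₂.2 + j.2) (n.1 + n.2 + 1) := by
  funext q
  simp only [diagEntry, quadPoly]
  push_cast
  ring

lemma diagEntry_coeffs_ne_zero {h₁ h₂ n j : ℤ × ℤ} (hnp : h₁.1 * h₂.2 - h₁.2 * h₂.1 ≠ 0)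
    (hne₁ : (n, j) ≠ ((-1, 0), h₁)) (hne₂ : (n, j) ≠ ((0, -1), h₂)) :
    (n.1 * h₁.1 ^ 2 + n.2 * h₂.1 ^ 2 + j.1 ^ 2, n.1 * h₁.1 * h₁.2 + n.2 * h₂.1 * h₂.2 + j.1 * j.2,
      n.1 * h₁.2 ^ 2 + n.2 * h₂.2 ^ 2 + j.2 ^ 2, n.1 * h₁.1 + n.2 * h₂.1 + j.1,
      n.1 * h₁.2 + n.2 * h₂.2 + j.2, n.1 + n.2 + 1) ≠ 0 := by
  obtain ⟨n₁, n₂⟩ := n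
  obtain ⟨j₁, j₂⟩ := j
  obtain ⟨a₁, a₂⟩ := h₁
  obtain ⟨b₁, b₂⟩ := h₂
  dsimp only at hnp ⊢
  intro h
  simp only [Prod.mk_eq_zero] at h
  obtain ⟨e₁₁, e₁₂, e₂₂, e₁, e₂, e₀⟩ := h
  obtain rfl : j₁ = -(n₁ * a₁ + n₂ * b₁) := by linarith
  obtain rfl : j₂ = -(n₁ * a₂ + n₂ * b₂) := by linarith
  -- The quadratic part is now `n₁(n₁+1) h₁h₁ᵀ + n₂(n₂+1) h₂h₂ᵀ + n₁n₂ (h₁h₂ᵀ + h₂h₁ᵀ)`, and these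
  -- three symmetric matrices are linearly independent since `h₁, h₂` are.
  have hd : (a₁ * b₂ - a₂ * b₁) ^ 2 ≠ 0 := pow_ne_zero 2 hnp
  have hα : n₁ * (n₁ + 1) = 0 := (mul_eq_zero.1 (by
    linear_combination b₂ ^ 2 * e₁₁ + b₁ ^ 2 * e₂₂ - 2 * b₁ * b₂ * e₁₂ :
      n₁ * (n₁ + 1) * (a₁ * b₂ - a₂ * b₁) ^ 2 = 0)).resolve_right hd
  have hβ : n₂ * (n₂ + 1) = 0 := (mul_eq_zero.1 (by
    linear_combination a₂ ^ 2 * e₁₁ + a₁ ^ 2 * e₂₂ - 2 * a₁ * a₂ * e₁₂ :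
      n₂ * (n₂ + 1) * (a₁ * b₂ - a₂ * b₁) ^ 2 = 0)).resolve_right hd
  have hγ : n₁ * n₂ = 0 := (mul_eq_zero.1 (by
    linear_combination (a₁ * b₂ + a₂ * b₁) * e₁₂ - 2 * a₂ * b₂ * e₁₁
      + a₁ * a₂ * (a₁ * b₂ - a₂ * b₁) * hα + b₁ * b₂ * (a₂ * b₁ - a₁ * b₂) * hβ :
      n₁ * n₂ * (a₁ * b₂ - a₂ * b₁) ^ 2 = 0)).resolve_right hd
  rcases mul_eq_zero.1 hγ with rfl | rfl
  · obtain rfl : n₂ = -1 := by linarith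
    exact hne₂ (by simp)
  · obtain rfl : n₁ = -1 := by linarith
    exact hne₁ (by simp)

lemma volume_abs_diagEntry_le {B : Set ℝ} (hB : MeasurableSet B) {h₁ h₂ n j : ℤ × ℤ}
    (hnp : h₁.1 * h₂.2 - h₁.2 * h₂.1 ≠ 0) (hne₁ : (n, j) ≠ ((-1, 0), h₁))
    (hne₂ : (n, j) ≠ ((0, -1), h₂)) {ε : ℝ} (hε : 0 < ε) :
    volume {q | q ∈ B ×ˢ B ×ˢ B ×ˢ B ∧ |diagEntry h₁ h₂ n j q| ≤ ε}
      ≤ volume B ^ 3 * ENNReal.ofReal (4 * √ε + 2 * ε) := by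
  rw [diagEntry_eq_quadPoly]
  exact volume_abs_quadPoly_le hB (diagEntry_coeffs_ne_zero hnp hne₁ hne₂) hε

lemma volume_exists_abs_diagEntry_le {B : Set ℝ} (hB : MeasurableSet B) {h₁ h₂ : ℤ × ℤ}
    (hnp : h₁.1 * h₂.2 - h₁.2 * h₂.1 ≠ 0) {F : Finset ((ℤ × ℤ) × (ℤ × ℤ))}
    (hF : ∀ r ∈ F, r ≠ ((-1, 0), h₁) ∧ r ≠ ((0, -1), h₂)) {ε : ℝ} (hε : 0 < ε) :
    volume {q | q ∈ B ×ˢ B ×ˢ B ×ˢ B ∧ ∃ r ∈ F, |diagEntry h₁ h₂ r.1 r.2 q| ≤ ε}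
      ≤ F.card * (volume B ^ 3 * ENNReal.ofReal (4 * √ε + 2 * ε)) := by
  calc _ ≤ volume (⋃ r ∈ F, {q | q ∈ B ×ˢ B ×ˢ B ×ˢ B ∧ |diagEntry h₁ h₂ r.1 r.2 q| ≤ ε}) :=
        measure_mono <| by
          rintro q ⟨hq, r, hr, hD⟩
          exact mem_iUnion₂.2 ⟨r, hr, hq, hD⟩
    _ ≤ ∑ r ∈ F, volume {q | q ∈ B ×ˢ B ×ˢ B ×ˢ B ∧ |diagEntry h₁ h₂ r.1 r.2 q| ≤ ε} :=
        measure_biUnion_finset_le _ _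
    _ ≤ F.card • (volume B ^ 3 * ENNReal.ofReal (4 * √ε + 2 * ε)) :=
        Finset.sum_le_card_nsmul _ _ _ fun r hr =>
          volume_abs_diagEntry_le hB hnp (hF r hr).1 (hF r hr).2 hε
    _ = _ := nsmul_eq_mul _ _

lemma card_Icc_neg_self (N : ℕ) : (Finset.Icc (-(N : ℤ)) N).card = 2 * N + 1 := by
  rw [Int.card_Icc]; omega

lemma tendsto_pow_floor_abs_log_rpow_mul_rpow {A θ b : ℝ} (hA : 1 ≤ A) (hθ : θ < 1) (hb : 0 < b) :
    Tendsto (fun δ => A ^ ⌊|log δ| ^ θ⌋₊ * δ ^ b) (𝓝[>] 0) (𝓝 0) := by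
  set g : ℝ → ℝ := fun x => log A * x ^ θ - b * x
  have hg : Tendsto g atTop atBot := by
    have hlin : Tendsto (fun x : ℝ => log A * x ^ (θ - 1) - b) atTop (𝓝 (log A * 0 - b)) := by
      have := tendsto_rpow_neg_atTop (show 0 < 1 - θ by linarith)
      rw [neg_sub] at this
      exact (this.const_mul _).sub_const _
    refine (tendsto_id.atTop_mul_neg (by simpa using hb) hlin).congr' ?_
    filter_upwards [eventually_gt_atTop 0] with x hx
    simp only [id, g, Real.rpow_sub_one hx.ne']
    field_simp
  have hx : Tendsto (fun δ => |log δ|) (𝓝[>] 0) atTop :=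
    tendsto_abs_atBot_atTop.comp tendsto_log_nhdsGT_zero
  refine tendsto_of_tendsto_of_tendsto_of_le_of_le' tendsto_const_nhds
    (tendsto_exp_atBot.comp (hg.comp hx)) ?_ ?_
  · filter_upwards [self_mem_nhdsWithin] with δ hδ
    have : 0 < δ := hδ
    positivity
  · filter_upwards [Ioo_mem_nhdsGT one_pos] with δ hδ
    have hlog : |log δ| = -log δ := abs_of_neg (log_neg hδ.1 hδ.2)
    have hpow : A ^ ⌊|log δ| ^ θ⌋₊ ≤ exp (log A * |log δ| ^ θ) := by
      rw [← Real.rpow_natCast, Real.rpow_def_of_pos (one_pos.trans_le hA)]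
      gcongr
      · exact log_nonneg hA
      · exact Nat.floor_le (by positivity)
    have hδb : δ ^ b = exp (-(b * |log δ|)) := by
      rw [Real.rpow_def_of_pos hδ.1, hlog]; ring_nf
    calc A ^ ⌊|log δ| ^ θ⌋₊ * δ ^ b ≤ exp (log A * |log δ| ^ θ) * exp (-(b * |log δ|)) := by
          rw [hδb]; gcongr
      _ = exp (g |log δ|) := by rw [← exp_add]; rfl

lemma exists_Ioo_forall_of_eventually_nhdsGT_zero {P : ℝ → Prop} (h : ∀ᶠ δ in 𝓝[>] 0, P δ) :
    ∃ δ₀ ∈ Ioo (0 : ℝ) 1, ∀ δ ∈ Ioo 0 δ₀, P δ := by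
  obtain ⟨u, hu, hsub⟩ :=
    (mem_nhdsGT_iff_exists_mem_Ioc_Ioo_subset (by norm_num : (0 : ℝ) < 1 / 2)).1 h
  exact ⟨u, ⟨hu.1, by linarith [hu.2]⟩, hsub⟩

lemma eventually_card_box_mul_bound_lt {A K : ℝ} (hA : 1 ≤ A) (hK : 0 ≤ K) {p : ℕ} (hp : 1 ≤ p) :
    ∀ᶠ δ in 𝓝[>] 0, (2 * A ^ ⌊|log δ| ^ ((3 : ℝ) / 4)⌋₊ + 1) ^ 4
      * (K * (4 * √(2 * δ ^ ((p : ℝ) / 2)) + 2 * (2 * δ ^ ((p : ℝ) / 2)))) < δ ^ ((p : ℝ) / 5) := by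
  have hlim := tendsto_pow_floor_abs_log_rpow_mul_rpow (A := A ^ 4) (θ := 3 / 4) (b := 1 / 20)
    (one_le_pow₀ hA) (by norm_num) (by norm_num)
  filter_upwards [hlim.eventually (gt_mem_nhds (show 0 < 1 / (810 * K + 1) by positivity)),
    Ioo_mem_nhdsGT one_pos] with δ hsmall hδ
  set R := ⌊|log δ| ^ ((3 : ℝ) / 4)⌋₊
  obtain ⟨hδ0, hδ1⟩ := hδ
  have hp' : (1 : ℝ) ≤ p := by exact_mod_cast hp
  have hAR : (2 * A ^ R + 1) ^ 4 ≤ 81 * (A ^ 4) ^ R := by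
    have := one_le_pow₀ (n := R) hA
    calc (2 * A ^ R + 1) ^ 4 ≤ (3 * A ^ R) ^ 4 := by gcongr; linarith
      _ = 81 * (A ^ 4) ^ R := by ring
  have hsq : √(2 * δ ^ ((p : ℝ) / 2)) = √2 * δ ^ ((p : ℝ) / 4) := by
    rw [Real.sqrt_mul zero_le_two]
    congr 1
    rw [Real.sqrt_eq_rpow, ← Real.rpow_mul hδ0.le]; ring_nf
  have hsq2 : √2 ≤ 3 / 2 := by rw [Real.sqrt_le_left] <;> norm_num
  have hsum : 4 * √(2 * δ ^ ((p : ℝ) / 2)) + 2 * (2 * δ ^ ((p : ℝ) / 2))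
      ≤ 10 * δ ^ ((p : ℝ) / 4) := by
    have : δ ^ ((p : ℝ) / 2) ≤ δ ^ ((p : ℝ) / 4) :=
      Real.rpow_le_rpow_of_exponent_ge hδ0 hδ1.le (by linarith)
    rw [hsq]; nlinarith [Real.rpow_nonneg hδ0.le ((p : ℝ) / 4)]
  -- The factor `δ ^ (p / 20) ≤ δ ^ (1 / 20)` absorbs the subexponential growth of `A ^ R`.
  have hδp : δ ^ ((p : ℝ) / 4) ≤ δ ^ ((1 : ℝ) / 20) * δ ^ ((p : ℝ) / 5) := by
    rw [show (p : ℝ) / 4 = p / 20 + p / 5 by ring, Real.rpow_add hδ0]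
    exact mul_le_mul_of_nonneg_right
      (Real.rpow_le_rpow_of_exponent_ge hδ0 hδ1.le (by linarith)) (by positivity)
  have hsmall' : 810 * K * ((A ^ 4) ^ R * δ ^ ((1 : ℝ) / 20)) < 1 := by
    rw [lt_div_iff₀ (by positivity)] at hsmall
    have : 0 ≤ (A ^ 4) ^ R * δ ^ ((1 : ℝ) / 20) := by positivity
    nlinarith
  have hpos : 0 < δ ^ ((p : ℝ) / 5) := by positivity
  calc _ ≤ 81 * (A ^ 4) ^ R * (K * (10 * (δ ^ ((1 : ℝ) / 20) * δ ^ ((p : ℝ) / 5)))) := by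
        refine mul_le_mul hAR (mul_le_mul_of_nonneg_left (hsum.trans ?_) hK) (by positivity)
          (by positivity)
        gcongr
    _ = 810 * K * ((A ^ 4) ^ R * δ ^ ((1 : ℝ) / 20)) * δ ^ ((p : ℝ) / 5) := by ring
    _ < δ ^ ((p : ℝ) / 5) := by nlinarith

theorem stmt_15_general (p : ℕ) (hp : 1 ≤ p) (h₁ h₂ : ℤ × ℤ)
    (hnp : h₁.1 * h₂.2 - h₁.2 * h₂.1 ≠ 0) (A : ℕ) (hA : 2 ≤ A) :
    ∃ δ₀ ∈ Set.Ioo (0 : ℝ) 1, ∀ δ ∈ Set.Ioo (0 : ℝ) δ₀,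
      volume {q : ℝ × ℝ × ℝ × ℝ |
          q ∈ Set.Ioo 0 (2 * π) ×ˢ Set.Ioo 0 (2 * π) ×ˢ Set.Ioo 0 (2 * π) ×ˢ Set.Ioo 0 (2 * π) ∧
          ∃ n j : ℤ × ℤ,
            (|n.1| ≤ (A : ℤ) ^ (⌊|Real.log δ| ^ ((3 : ℝ) / 4)⌋₊) ∧
              |n.2| ≤ (A : ℤ) ^ (⌊|Real.log δ| ^ ((3 : ℝ) / 4)⌋₊) ∧
              |j.1| ≤ (A : ℤ) ^ (⌊|Real.log δ| ^ ((3 : ℝ) / 4)⌋₊) ∧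
              |j.2| ≤ (A : ℤ) ^ (⌊|Real.log δ| ^ ((3 : ℝ) / 4)⌋₊)) ∧
            (n, j) ≠ (((-1 : ℤ), (0 : ℤ)), h₁) ∧ (n, j) ≠ (((0 : ℤ), (-1 : ℤ)), h₂) ∧
            |(n.1 : ℝ) * (((h₁.1 : ℝ) * q.1 + (h₁.2 : ℝ) * q.2.1 + q.2.2.1) ^ 2 + q.2.2.2)
              + (n.2 : ℝ) * (((h₂.1 : ℝ) * q.1 + (h₂.2 : ℝ) * q.2.1 + q.2.2.1) ^ 2 + q.2.2.2)
              + ((j.1 : ℝ) * q.1 + (j.2 : ℝ) * q.2.1 + q.2.2.1) ^ 2 + q.2.2.2|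
              ≤ 2 * δ ^ ((p : ℝ) / 2)}
        < ENNReal.ofReal (δ ^ ((p : ℝ) / 5)) := by
  obtain ⟨δ₀, hδ₀, hlt⟩ := exists_Ioo_forall_of_eventually_nhdsGT_zero
    (eventually_card_box_mul_bound_lt (A := A) (K := (2 * π) ^ 3) (by norm_cast; omega)
      (by positivity) hp)
  refine ⟨δ₀, hδ₀, fun δ hδ => ?_⟩
  have hδ0 := hδ.1
  set N : ℕ := A ^ ⌊|log δ| ^ ((3 : ℝ) / 4)⌋₊ with hN
  set I := Finset.Icc (-(N : ℤ)) N
  set F := ((I ×ˢ I) ×ˢ (I ×ˢ I)).filter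
    fun r : (ℤ × ℤ) × (ℤ × ℤ) => r ≠ ((-1, 0), h₁) ∧ r ≠ ((0, -1), h₂)
  have hF : (F.card : ℝ) ≤ (2 * N + 1) ^ 4 := by
    have : F.card ≤ (2 * N + 1) ^ 4 := (Finset.card_filter_le _ _).trans_eq
      (by simp only [Finset.card_product, I, card_Icc_neg_self]; ring)
    exact_mod_cast this
  calc volume _ ≤ volume {q | q ∈ Ioo 0 (2 * π) ×ˢ Ioo 0 (2 * π) ×ˢ Ioo 0 (2 * π) ×ˢ Ioo 0 (2 * π)
        ∧ ∃ r ∈ F, |diagEntry h₁ h₂ r.1 r.2 q| ≤ 2 * δ ^ ((p : ℝ) / 2)} := by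
        refine measure_mono fun q ⟨hq, n, j, ⟨hn₁, hn₂, hj₁, hj₂⟩, hne₁, hne₂, hD⟩ =>
          ⟨hq, (n, j), Finset.mem_filter.2 ⟨?_, hne₁, hne₂⟩, hD⟩
        simp only [Finset.mem_product, Finset.mem_Icc, I, hN, Nat.cast_pow, ← abs_le]
        exact ⟨⟨hn₁, hn₂⟩, hj₁, hj₂⟩
    _ ≤ _ := volume_exists_abs_diagEntry_le measurableSet_Ioo hnp
        (fun r hr => (Finset.mem_filter.1 hr).2) (by positivity)
    _ ≤ ENNReal.ofReal ((2 * N + 1) ^ 4 * ((2 * π) ^ 3 * (4 * √(2 * δ ^ ((p : ℝ) / 2))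
        + 2 * (2 * δ ^ ((p : ℝ) / 2))))) := by
        rw [Real.volume_Ioo, sub_zero, ← ENNReal.ofReal_natCast,
          ← ENNReal.ofReal_pow (by positivity), ← ENNReal.ofReal_mul (by positivity),
          ← ENNReal.ofReal_mul (by positivity)]
        gcongr
    _ < ENNReal.ofReal (δ ^ ((p : ℝ) / 5)) := by
        rw [ENNReal.ofReal_lt_ofReal_iff (by positivity), hN, Nat.cast_pow]
        exact hlt δ hδ

/-- **initial-scale measure excision.** For non-parallel nonzero
`h₁, h₂ ∈ ℤ²` and an integer `A ≥ 2`, for all small `δ`, with `R = ⌊|log δ|^{3/4}⌋` and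
`N = A^R`, the set of `(λ, m, M) ∈ (0,2π)⁴` where some diagonal entry `D(n, j)` with
`(n, j)` in the `N`-box but outside the resonant set is `≤ 2δ^{p/2}` in modulus has
measure `< δ^{p/5}`. -/
theorem stmt_15 (p : ℕ) (hp : 1 ≤ p) (h₁ h₂ : ℤ × ℤ) (hh₁ : h₁ ≠ 0) (hh₂ : h₂ ≠ 0)
    (hnp : h₁.1 * h₂.2 - h₁.2 * h₂.1 ≠ 0) (A : ℕ) (hA : 2 ≤ A) :
    ∃ δ₀ ∈ Set.Ioo (0 : ℝ) 1, ∀ δ ∈ Set.Ioo (0 : ℝ) δ₀,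
      volume {q : ℝ × ℝ × ℝ × ℝ |
          q ∈ Set.Ioo 0 (2 * π) ×ˢ Set.Ioo 0 (2 * π) ×ˢ Set.Ioo 0 (2 * π) ×ˢ Set.Ioo 0 (2 * π) ∧
          ∃ n j : ℤ × ℤ,
            (|n.1| ≤ (A : ℤ) ^ (⌊|Real.log δ| ^ ((3 : ℝ) / 4)⌋₊) ∧
              |n.2| ≤ (A : ℤ) ^ (⌊|Real.log δ| ^ ((3 : ℝ) / 4)⌋₊) ∧
              |j.1| ≤ (A : ℤ) ^ (⌊|Real.log δ| ^ ((3 : ℝ) / 4)⌋₊) ∧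
              |j.2| ≤ (A : ℤ) ^ (⌊|Real.log δ| ^ ((3 : ℝ) / 4)⌋₊)) ∧
            (n, j) ≠ (((-1 : ℤ), (0 : ℤ)), h₁) ∧ (n, j) ≠ (((0 : ℤ), (-1 : ℤ)), h₂) ∧
            |(n.1 : ℝ) * (((h₁.1 : ℝ) * q.1 + (h₁.2 : ℝ) * q.2.1 + q.2.2.1) ^ 2 + q.2.2.2)
              + (n.2 : ℝ) * (((h₂.1 : ℝ) * q.1 + (h₂.2 : ℝ) * q.2.1 + q.2.2.1) ^ 2 + q.2.2.2)
              + ((j.1 : ℝ) * q.1 + (j.2 : ℝ) * q.2.1 + q.2.2.1) ^ 2 + q.2.2.2|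
              ≤ 2 * δ ^ ((p : ℝ) / 2)}
        < ENNReal.ofReal (δ ^ ((p : ℝ) / 5)) :=
  stmt_15_general p hp h₁ h₂ hnp A hA
end
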